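/- There exists a finite simple connected graph G with at least two vertices such that μ(G) > max over all vertices v of G of √(m_v³·(m_v + 3·d_v))/d_v. (This disproves conjectured vertex-maximum bound 32 of Brankov, Hansen and Stevanović.) -/

import Mathlib

noncomputable section

open Finset

/-- The degree of a vertex, as a real number. -/
def degR {V : Type*} [Fintype V] (G : SimpleGraph V) (v : V) : ℝ :=
  letI := Classical.decRel G.Adj
  (G.degree v : ℝ)

/-- The average degree of the neighbours of a vertex, as a real number:
`m_v = (∑_{u ~ v} d_u) / d_v`. -/
def avgDegR {V : Type*} [Fintype V] (G : SimpleGraph V) (v : V) : ℝ :=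
  letI := Classical.decRel G.Adj
  (∑ u ∈ G.neighborFinset v, (G.degree u : ℝ)) / (G.degree v : ℝ)

/-- The largest eigenvalue of the Laplacian matrix `L = D - A` of a finite graph. -/
def lapSpecRad {V : Type*} [Fintype V] [DecidableEq V] [Nonempty V]
    (G : SimpleGraph V) : ℝ :=
  letI := Classical.decRel G.Adj
  ⨆ i, (SimpleGraph.posSemidef_lapMatrix ℝ G).isHermitian.eigenvalues i

/-!
A vertex `w` adjacent to all others makes `n • 𝟙_w - 𝟙` an eigenvector of the Laplacian with
eigenvalue `n = |V|`, so `μ(G) ≥ n`. Take the cone over the 6-regular circulant graph on `ℤ/20`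
with jumps `±1, ±2, ±3`: then `μ ≥ 21`, the apex has `d = 20`, `m = 7`, and every other vertex
has `d = 7`, `m = 62/7`. The bound is `√22981 / 20 ≈ 7.6` at the apex and
`√(62³ · 209) / 343 ≈ 20.6` elsewhere, both below `21`.
-/

open Matrix

theorem Matrix.IsHermitian.mem_range_eigenvalues_of_mulVec_eq_smul {n : Type*} [Fintype n]
    [DecidableEq n] {A : Matrix n n ℝ} (hA : A.IsHermitian) {x : n → ℝ} (hx : x ≠ 0) {c : ℝ}
    (h : A *ᵥ x = c • x) : c ∈ Set.range hA.eigenvalues := by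
  rw [← hA.spectrum_real_eq_range_eigenvalues, ← Matrix.spectrum_toLin']
  exact (Module.End.hasEigenvalue_of_hasEigenvector
    ⟨Module.End.mem_eigenspace_iff.mpr (by rwa [Matrix.toLin'_apply]), hx⟩).mem_spectrum

section Degrees

variable {V : Type*} [Fintype V]

theorem degR_eq_degree (G : SimpleGraph V) [DecidableRel G.Adj] (v : V) :
    degR G v = G.degree v := by
  unfold degR; congr!

theorem avgDegR_eq (G : SimpleGraph V) [DecidableRel G.Adj] (v : V) :
    avgDegR G v = (∑ u ∈ G.neighborFinset v, G.degree u : ℕ) / G.degree v := by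
  unfold avgDegR; push_cast; congr!

end Degrees

namespace SimpleGraph

variable {V : Type*}

section Laplacian

variable [Fintype V] [DecidableEq V] (G : SimpleGraph V) [DecidableRel G.Adj]

theorem le_lapSpecRad_of_mulVec_eq_smul [Nonempty V] {x : V → ℝ} (hx : x ≠ 0) {c : ℝ}
    (h : G.lapMatrix ℝ *ᵥ x = c • x) : c ≤ lapSpecRad G := by
  -- `lapSpecRad` is defined through the classical decidability instance.
  obtain rfl : ‹DecidableRel G.Adj› = Classical.decRel G.Adj := Subsingleton.elim _ _
  let := Classical.decRel G.Adj
  obtain ⟨i, rfl⟩ :=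
    (posSemidef_lapMatrix ℝ G).isHermitian.mem_range_eigenvalues_of_mulVec_eq_smul hx h
  exact le_ciSup (Set.finite_range _).bddAbove i

theorem lapMatrix_mulVec_single_of_isUniversal {w : V} (hw : G.IsUniversal w) :
    G.lapMatrix ℝ *ᵥ Pi.single w 1 = (Fintype.card V : ℝ) • Pi.single w 1 - 1 := by
  have hdeg : G.degree w = Fintype.card V - 1 := (G.degree_eq_card_sub_one w).mpr hw
  ext v
  rw [Matrix.mulVec_single_one]
  by_cases hv : v = w
  · subst hv
    have : 1 ≤ Fintype.card V := Fintype.card_pos_iff.mpr ⟨v⟩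
    simp [lapMatrix, degMatrix, hdeg, Nat.cast_sub this]
  · simp [lapMatrix, degMatrix, hv, (hw (Ne.symm hv)).symm]

theorem card_le_lapSpecRad_of_isUniversal [Nontrivial V] {w : V} (hw : G.IsUniversal w) :
    (Fintype.card V : ℝ) ≤ lapSpecRad G := by
  obtain ⟨v, hv⟩ := exists_ne w
  refine G.le_lapSpecRad_of_mulVec_eq_smul (x := (Fintype.card V : ℝ) • Pi.single w 1 - 1)
    (fun h => by simpa [hv] using congrFun h v) ?_
  have hconst : G.lapMatrix ℝ *ᵥ 1 = 0 := G.lapMatrix_mulVec_const_eq_zero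
  rw [Matrix.mulVec_sub, Matrix.mulVec_smul, hconst, sub_zero,
    G.lapMatrix_mulVec_single_of_isUniversal hw]

end Laplacian

def cone (H : SimpleGraph V) : SimpleGraph (Option V) where
  Adj
    | none, none => False
    | none, some _ => True
    | some _, none => True
    | some u, some v => H.Adj u v
  symm := ⟨by
    rintro (_ | u) (_ | v) h
    exacts [h, h, h, h.symm]⟩
  loopless := ⟨by
    rintro (_ | u) h
    exacts [h, H.loopless.irrefl u h]⟩

variable (H : SimpleGraph V)

@[simp] theorem cone_adj_none_some (v : V) : (cone H).Adj none (some v) := trivial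
@[simp] theorem cone_adj_some_none (v : V) : (cone H).Adj (some v) none := trivial
@[simp] theorem cone_adj_some_some (u v : V) : (cone H).Adj (some u) (some v) ↔ H.Adj u v :=
  Iff.rfl

instance [DecidableRel H.Adj] : DecidableRel (cone H).Adj
  | none, none => isFalse id
  | none, some _ => isTrue trivial
  | some _, none => isTrue trivial
  | some u, some v => inferInstanceAs (Decidable (H.Adj u v))

theorem isUniversal_cone_none : (cone H).IsUniversal none := by
  rintro (_ | v) h
  exacts [(h rfl).elim, trivial]

theorem connected_cone : (cone H).Connected :=
  .of_isUniversal (H.isUniversal_cone_none)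

variable [Fintype V] [DecidableRel H.Adj]

theorem neighborFinset_cone_none : (cone H).neighborFinset none = univ.map .some := by
  ext (_ | v) <;> simp

theorem neighborFinset_cone_some (v : V) :
    (cone H).neighborFinset (some v) = insertNone (H.neighborFinset v) := by
  ext (_ | u) <;> simp

theorem degree_cone_none : (cone H).degree none = Fintype.card V := by
  simp [← card_neighborFinset_eq_degree, neighborFinset_cone_none]

theorem degree_cone_some (v : V) : (cone H).degree (some v) = H.degree v + 1 := by
  simp [← card_neighborFinset_eq_degree, neighborFinset_cone_some]

variable {H} {r : ℕ}

theorem sum_degree_neighborFinset_cone_none (hH : H.IsRegularOfDegree r) :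
    ∑ u ∈ (cone H).neighborFinset none, (cone H).degree u = Fintype.card V * (r + 1) := by
  rw [neighborFinset_cone_none, sum_map]
  -- `simp` cannot rewrite under `degree`, whose `Fintype` instance depends on the vertex.
  change ∑ v : V, (cone H).degree (some v) = _
  simp [degree_cone_some, hH.degree_eq]

theorem sum_degree_neighborFinset_cone_some (hH : H.IsRegularOfDegree r) (v : V) :
    ∑ u ∈ (cone H).neighborFinset (some v), (cone H).degree u = Fintype.card V + r * (r + 1) := by
  simp [neighborFinset_cone_some, degree_cone_none, degree_cone_some, hH.degree_eq]

end SimpleGraph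

section Cone

variable {V : Type*} [Fintype V] {H : SimpleGraph V} [DecidableRel H.Adj] {r : ℕ}

open SimpleGraph

theorem degR_cone_none : degR H.cone none = Fintype.card V := by
  rw [degR_eq_degree, degree_cone_none]

theorem degR_cone_some (hH : H.IsRegularOfDegree r) (v : V) : degR H.cone (some v) = r + 1 := by
  rw [degR_eq_degree, degree_cone_some, hH.degree_eq]; push_cast; rfl

theorem avgDegR_cone_none [Nonempty V] (hH : H.IsRegularOfDegree r) :
    avgDegR H.cone none = r + 1 := by
  rw [avgDegR_eq, sum_degree_neighborFinset_cone_none hH, degree_cone_none]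
  push_cast
  field_simp

theorem avgDegR_cone_some (hH : H.IsRegularOfDegree r) (v : V) :
    avgDegR H.cone (some v) = (Fintype.card V + r * (r + 1)) / (r + 1) := by
  rw [avgDegR_eq, sum_degree_neighborFinset_cone_some hH, degree_cone_some, hH.degree_eq]
  push_cast; rfl

end Cone

theorem sqrt_div_lt_iff {d m μ : ℝ} (hd : 0 < d) (hμ : 0 < μ) :
    √(m ^ 3 * (m + 3 * d)) / d < μ ↔ m ^ 3 * (m + 3 * d) < (μ * d) ^ 2 := by
  rw [div_lt_iff₀ hd, Real.sqrt_lt' (by positivity)]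

/-- There exists a finite simple connected graph `G` with at least two vertices whose
Laplacian spectral radius exceeds the conjectured vertex-maximum bound. -/
theorem exists_counterexample_bound32 :
    ∃ (V : Type) (_ : Fintype V) (_ : DecidableEq V) (_ : Nonempty V)
      (G : SimpleGraph V), G.Connected ∧ 2 ≤ Fintype.card V ∧
      ∀ v : V, (fun d m => Real.sqrt (m ^ 3 * (m + 3 * d)) / d) (degR G v) (avgDegR G v) < lapSpecRad G := by
  let H := SimpleGraph.circulantGraph ({1, 2, 3} : Set (ZMod 20))
  have hH : H.IsRegularOfDegree 6 := by unfold SimpleGraph.IsRegularOfDegree; decide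
  have hcard : Fintype.card (Option (ZMod 20)) = 21 := rfl
  refine ⟨_, inferInstance, inferInstance, inferInstance, H.cone, H.connected_cone,
    by rw [hcard]; norm_num, ?_⟩
  have hμ : (21 : ℝ) ≤ lapSpecRad H.cone := by
    simpa [hcard] using H.cone.card_le_lapSpecRad_of_isUniversal H.isUniversal_cone_none
  rintro (_ | v) <;> refine lt_of_lt_of_le ?_ hμ
  · rw [degR_cone_none, avgDegR_cone_none hH, sqrt_div_lt_iff (by simp) (by norm_num)]
    norm_num
  · rw [degR_cone_some hH, avgDegR_cone_some hH, sqrt_div_lt_iff (by norm_num) (by norm_num)]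
    norm_num
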